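/- arXiv:2107.01874 — 2 statements merged into one kernel-verified Lean document; each statement's English description precedes it below -/
import Mathlib

section
/- Let F be a field. Let σ₁, σ₂ ∈ SL₃(F) be the matrices σ₁ = [[0,1,0],[-1,0,0],[0,0,1]] and σ₂ = [[1,0,0],[0,0,-1],[0,1,0]], and let P₂,₁(F) = {g ∈ SL₃(F) : g₃₁ = g₃₂ = 0} and P₁,₂(F) = {g ∈ SL₃(F) : g₂₁ = g₃₁ = 0}. Then P₂,₁(F)·σ₁σ₂·P₁,₂(F) = {g ∈ SL₃(F) : g₃₁ = 0}; that is, a matrix g ∈ SL₃(F) satisfies g₃₁ = 0 if and only if g = p·σ₁σ₂·q for some p ∈ P₂,₁(F) and q ∈ P₁,₂(F). -/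
open Matrix

/-- The Weyl element `σ₁ ∈ SL₃(F)`. -/
def sigma1 (F : Type*) [Field F] : Matrix.SpecialLinearGroup (Fin 3) F :=
  ⟨!![0, 1, 0; -1, 0, 0; 0, 0, 1], by simp [Matrix.det_fin_three]⟩

/-- The Weyl element `σ₂ ∈ SL₃(F)`. -/
def sigma2 (F : Type*) [Field F] : Matrix.SpecialLinearGroup (Fin 3) F :=
  ⟨!![1, 0, 0; 0, 0, -1; 0, 1, 0], by simp [Matrix.det_fin_three]⟩

/-- The maximal parabolic subgroup `P₂,₁(F) = {g ∈ SL₃(F) : g₃₁ = g₃₂ = 0}`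
(block upper-triangular of shape `(2,1)`), as a set. -/
def P21 (F : Type*) [Field F] : Set (Matrix.SpecialLinearGroup (Fin 3) F) :=
  {g | g.val 2 0 = 0 ∧ g.val 2 1 = 0}

/-- The maximal parabolic subgroup `P₁,₂(F) = {g ∈ SL₃(F) : g₂₁ = g₃₁ = 0}`
(block upper-triangular of shape `(1,2)`), as a set. -/
def P12 (F : Type*) [Field F] : Set (Matrix.SpecialLinearGroup (Fin 3) F) :=
  {g | g.val 1 0 = 0 ∧ g.val 2 0 = 0}

/- Since `g₃₁ = 0`, the first column `g e₁` is a nonzero vector of the plane `⟨e₁, e₂⟩`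
stabilised by `P₂,₁`. As `P₂,₁` acts transitively on the nonzero vectors of that plane, some
`p ∈ P₂,₁` satisfies `p σ₁σ₂ e₁ = g e₁`; then `q := (p σ₁σ₂)⁻¹ g` fixes `e₁`, i.e. `q ∈ P₁,₂`.
Conversely, the last row of `p σ₁σ₂` is a multiple of `e₂ᵀ`, so `(p σ₁σ₂ q)₃₁` is a multiple
of `q₂₁ = 0`. -/

namespace Matrix.SpecialLinearGroup

variable {n R : Type*} [Fintype n] [DecidableEq n] [CommRing R]

lemma inv_mul_apply_of_col_eq {g h : SpecialLinearGroup n R} {j : n}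
    (hcol : ∀ i, g i j = h i j) (i : n) : (h⁻¹ * g) i j = (1 : Matrix n n R) i j := by
  simp only [coe_mul, Matrix.mul_apply, hcol]
  rw [← Matrix.mul_apply, ← coe_mul, inv_mul_cancel, coe_one]

lemma exists_apply_ne_zero (g : SpecialLinearGroup n R) [Nontrivial R] (j : n) :
    ∃ i, g i j ≠ 0 := by
  by_contra! h
  simpa using (det_coe g).symm.trans (det_eq_zero_of_column_eq_zero j h)

end Matrix.SpecialLinearGroup

section

variable {F : Type*} [Field F]

lemma sigma1_mul_sigma2_coe :
    ((sigma1 F * sigma2 F : Matrix.SpecialLinearGroup (Fin 3) F) : Matrix (Fin 3) (Fin 3) F) =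
      !![0, 0, -1; -1, 0, 0; 0, 1, 0] := by
  rw [Matrix.SpecialLinearGroup.coe_mul]
  simp [sigma1, sigma2]

lemma exists_mul_sub_mul_eq_one {a d : F} (had : a ≠ 0 ∨ d ≠ 0) :
    ∃ x y : F, x * d - a * y = 1 := by
  rcases had with ha | hd
  · exact ⟨0, -a⁻¹, by field_simp; ring⟩
  · exact ⟨d⁻¹, 0, by field_simp; ring⟩

lemma exists_mem_P21_col_one_eq {a d : F} (had : a ≠ 0 ∨ d ≠ 0) :
    ∃ p ∈ P21 F, p 0 1 = a ∧ p 1 1 = d := by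
  obtain ⟨x, y, hxy⟩ := exists_mul_sub_mul_eq_one had
  let p : Matrix.SpecialLinearGroup (Fin 3) F :=
    ⟨!![x, a, 0; y, d, 0; 0, 0, 1], by simpa [Matrix.det_fin_three] using hxy⟩
  exact ⟨p, ⟨rfl, rfl⟩, rfl, rfl⟩

lemma exists_mem_P21_mul_sigma_col_eq {g : Matrix.SpecialLinearGroup (Fin 3) F} (hg : g 2 0 = 0) :
    ∃ p ∈ P21 F, ∀ i, g i 0 = (p * (sigma1 F * sigma2 F)) i 0 := by
  have had : -g 0 0 ≠ 0 ∨ -g 1 0 ≠ 0 := by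
    obtain ⟨i, hi⟩ := g.exists_apply_ne_zero 0
    fin_cases i
    exacts [Or.inl (neg_ne_zero.2 hi), Or.inr (neg_ne_zero.2 hi), absurd hg hi]
  obtain ⟨p, hp, hp0, hp1⟩ := exists_mem_P21_col_one_eq had
  refine ⟨p, hp, fun i => ?_⟩
  rw [Matrix.SpecialLinearGroup.coe_mul, sigma1_mul_sigma2_coe]
  fin_cases i <;> simp [Matrix.mul_apply, Fin.sum_univ_three, hp0, hp1, hp.2, hg]

lemma inv_mul_mem_P12 {g h : Matrix.SpecialLinearGroup (Fin 3) F} (hcol : ∀ i, g i 0 = h i 0) :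
    h⁻¹ * g ∈ P12 F := by
  constructor <;> rw [Matrix.SpecialLinearGroup.inv_mul_apply_of_col_eq hcol] <;> rfl

lemma mul_sigma_mul_apply_two_zero {p q : Matrix.SpecialLinearGroup (Fin 3) F}
    (hp : p ∈ P21 F) (hq : q ∈ P12 F) : (p * (sigma1 F * sigma2 F) * q) 2 0 = 0 := by
  rw [Matrix.SpecialLinearGroup.coe_mul, Matrix.SpecialLinearGroup.coe_mul, sigma1_mul_sigma2_coe]
  simp [Matrix.mul_apply, Fin.sum_univ_three, hp.1, hp.2, hq.1]

end

/-- `P₂,₁(F)·σ₁σ₂·P₁,₂(F) = {g ∈ SL₃(F) : g₃₁ = 0}`: a matrix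
`g ∈ SL₃(F)` has vanishing `(3,1)` entry iff `g = p·σ₁σ₂·q` with `p ∈ P₂,₁(F)`
and `q ∈ P₁,₂(F)`. -/
theorem parabolic_product_description (F : Type*) [Field F] :
    ∀ g : Matrix.SpecialLinearGroup (Fin 3) F,
      g.val 2 0 = 0 ↔ ∃ p ∈ P21 F, ∃ q ∈ P12 F, g = p * (sigma1 F * sigma2 F) * q := by
  intro g
  constructor
  · intro hg
    obtain ⟨p, hp, hcol⟩ := exists_mem_P21_mul_sigma_col_eq hg
    exact ⟨p, hp, _, inv_mul_mem_P12 hcol, by group⟩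
  · rintro ⟨p, hp, q, hq, rfl⟩
    exact mul_sigma_mul_apply_two_zero hp hq
end

section
/- Let n > 2 be an integer and R a commutative ring. For 1 ≤ j ≤ n−1 let σⱼ ∈ SLₙ(R) be the matrix which agrees with the identity matrix except in rows j and j+1, where row j equals −e_{j+1} and row j+1 equals e_j (e_i the i-th standard basis row vector), and set γ₁ = σ₁σ₂⋯σ_{n−1}. Let Bₙ(R) ≤ SLₙ(R) be the group of upper-triangular matrices, let P'(R) = {g ∈ SLₙ(R) : g_{ij} = 0 whenever i ≥ 3 and j ≤ 2, and g_{ij} = 0 whenever i > j ≥ 3} (block upper-triangular with an invertible 2×2 block in the upper left and an upper-triangular (n−2)×(n−2) block in the lower right), and let H(R) = {g ∈ SLₙ(R) : g_{ij} = 0 whenever i > j and j ≤ n−2} (block upper-triangular with an upper-triangular (n−2)×(n−2) block in the upper left and an invertible 2×2 block in the lower right). Then Bₙ(R)·γ₁·Bₙ(R) ⊆ P'(R)·γ₁·H(R) ⊆ {g ∈ SLₙ(R) : g_{ij} = 0 whenever i > j + 1}. -/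
/-! Multiplying out `σ₁⋯σₙ₋₁` shows that `γ₁` is a signed cyclic shift: `(γ₁)ᵢₖ = δ_{i,k+1}` for
`i ≥ 1`, and row `0` is `±e_{n-1}`. In particular `γ₁` is upper Hessenberg.

The first inclusion holds because `Bₙ` lies in both `P'` and `H`. For the second, an entry
`(i, j)` with `i > j + 1` has `i ≥ 2` and `j ≤ n - 3`. Row `i` of `p ∈ P'` vanishes left of the
diagonal, so row `i` of `pγ₁` vanishes left of the subdiagonal; column `j` of `h ∈ H` vanishes
below the diagonal; hence `(pγ₁h)ᵢⱼ = 0`. -/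

open Matrix

/-- For `0 ≤ j`, the matrix `σⱼ₊₁` (in the 1-indexed numbering of the paper):
it agrees with the identity except in rows `j` and `j+1` (0-indexed), where
row `j` equals `−e_{j+1}` and row `j+1` equals `e_j`. -/
def sigmaMat (n : ℕ) (R : Type*) [CommRing R] (j : ℕ) : Matrix (Fin n) (Fin n) R :=
  Matrix.of fun i k =>
    if (i : ℕ) = j then (if (k : ℕ) = j + 1 then -1 else 0)
    else if (i : ℕ) = j + 1 then (if (k : ℕ) = j then 1 else 0)
    else if i = k then 1 else 0

/-- The Coxeter element `γ₁ = σ₁σ₂⋯σ_{n−1}`. -/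
def gammaOne (n : ℕ) (R : Type*) [CommRing R] : Matrix (Fin n) (Fin n) R :=
  ((List.range (n - 1)).map (sigmaMat n R)).prod

/-- The Borel subgroup `Bₙ(R)` of upper-triangular matrices in `SLₙ(R)`. -/
def BorelSet (n : ℕ) (R : Type*) [CommRing R] : Set (Matrix (Fin n) (Fin n) R) :=
  {g | g.det = 1 ∧ ∀ i j : Fin n, (j : ℕ) < (i : ℕ) → g i j = 0}

/-- The parabolic subgroup `P'(R) ≤ SLₙ(R)`: block upper-triangular with an
invertible `2×2` block in the upper left and an upper-triangular
`(n−2)×(n−2)` block in the lower right.  (1-indexed conditions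
`g_{ij} = 0` for `i ≥ 3, j ≤ 2` and for `i > j ≥ 3` become, 0-indexed,
`i ≥ 2, j ≤ 1` and `i > j ≥ 2`.) -/
def PprimeSet (n : ℕ) (R : Type*) [CommRing R] : Set (Matrix (Fin n) (Fin n) R) :=
  {g | g.det = 1 ∧
    (∀ i j : Fin n, 2 ≤ (i : ℕ) → (j : ℕ) ≤ 1 → g i j = 0) ∧
    (∀ i j : Fin n, (j : ℕ) < (i : ℕ) → 2 ≤ (j : ℕ) → g i j = 0)}

/-- The subgroup `H(R) ≤ SLₙ(R)`: block upper-triangular with an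
upper-triangular `(n−2)×(n−2)` block in the upper left and an invertible `2×2`
block in the lower right.  (1-indexed condition `g_{ij} = 0` for `i > j` and
`j ≤ n−2` becomes, 0-indexed, `i > j` and `j ≤ n−3`.) -/
def Hset (n : ℕ) (R : Type*) [CommRing R] : Set (Matrix (Fin n) (Fin n) R) :=
  {g | g.det = 1 ∧ ∀ i j : Fin n, (j : ℕ) < (i : ℕ) → (j : ℕ) ≤ n - 3 → g i j = 0}

/-- The upper Hessenberg matrices of determinant one:
`{g ∈ SLₙ(R) : g_{ij} = 0 whenever i > j + 1}`. -/
def HessSet (n : ℕ) (R : Type*) [CommRing R] : Set (Matrix (Fin n) (Fin n) R) :=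
  {g | g.det = 1 ∧ ∀ i j : Fin n, (j : ℕ) + 1 < (i : ℕ) → g i j = 0}

namespace Matrix

theorem mul_apply_eq_zero_of_add_lt {R : Type*} [NonUnitalNonAssocSemiring R] {m n p : ℕ}
    {A : Matrix (Fin m) (Fin n) R} {B : Matrix (Fin n) (Fin p) R} {i : Fin m} {k : Fin p}
    {a b : ℕ} (hA : ∀ l : Fin n, (l : ℕ) + a < i → A i l = 0)
    (hB : ∀ l : Fin n, (k : ℕ) + b < l → B l k = 0) (hik : (k : ℕ) + (a + b) < i) :
    (A * B) i k = 0 := by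
  rw [mul_apply]
  refine Finset.sum_eq_zero fun l _ => ?_
  by_cases hl : (l : ℕ) + a < i
  · rw [hA l hl, zero_mul]
  · rw [hB l (by omega), mul_zero]

end Matrix

section Coxeter

variable {n : ℕ} {R : Type*} [CommRing R]

theorem sigmaMat_eq_diagonal_mul_permute {j : ℕ} (hj : j + 1 < n) :
    sigmaMat n R j = diagonal (Function.update 1 ⟨j, by omega⟩ (-1)) *
      (1 : Matrix (Fin n) (Fin n) R).submatrix (Equiv.swap ⟨j, by omega⟩ ⟨j + 1, hj⟩) id := by
  ext i k
  simp only [sigmaMat, of_apply, diagonal_mul, submatrix_apply, one_apply, id_eq,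
    Function.update_apply, Pi.one_apply, Equiv.swap_apply_def, Fin.ext_iff]
  split_ifs <;> simp_all

theorem det_sigmaMat {j : ℕ} (hj : j + 1 < n) : (sigmaMat n R j).det = 1 := by
  rw [sigmaMat_eq_diagonal_mul_permute hj, det_mul, det_diagonal, det_permute, det_one,
    Equiv.Perm.sign_swap (by simp [Fin.ext_iff]), Finset.prod_update_of_mem (Finset.mem_univ _)]
  simp

theorem det_gammaOne : (gammaOne n R).det = 1 := by
  rw [gammaOne, ← coe_detMonoidHom, map_list_prod, List.map_map]
  refine List.prod_eq_one fun d hd => ?_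
  obtain ⟨j, hj, rfl⟩ := List.mem_map.1 hd
  exact det_sigmaMat (by simp at hj; omega)

theorem mul_sigmaMat_apply {m : ℕ} (A : Matrix (Fin m) (Fin n) R) {j : ℕ} (hj : j + 1 < n)
    (i : Fin m) (k : Fin n) :
    (A * sigmaMat n R j) i k =
      if (k : ℕ) = j then A i ⟨j + 1, hj⟩
      else if (k : ℕ) = j + 1 then -A i ⟨j, by omega⟩ else A i k := by
  have hcol : (fun l => sigmaMat n R j l k) =
      if (k : ℕ) = j then Pi.single ⟨j + 1, hj⟩ 1
      else if (k : ℕ) = j + 1 then Pi.single ⟨j, by omega⟩ (-1) else Pi.single k 1 := by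
    ext l
    simp only [sigmaMat, of_apply]
    split_ifs <;> simp_all [Pi.single_apply, Fin.ext_iff]
  rw [mul_apply', hcol]
  split_ifs <;> simp [dotProduct_single]

theorem list_prod_sigmaMat_apply {m : ℕ} (hm : m < n) (i k : Fin n) :
    ((List.range m).map (sigmaMat n R)).prod i k =
      if (i : ℕ) = 0 then (if (k : ℕ) = m then (-1) ^ m else 0)
      else if (i : ℕ) ≤ m then (if (k : ℕ) + 1 = i then 1 else 0)
      else if (k : ℕ) = i then 1 else 0 := by
  induction m generalizing k with
  | zero =>
    rw [List.range_zero, List.map_nil, List.prod_nil, one_apply]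
    split_ifs <;> first | rfl | (exfalso; omega) | simp_all [Fin.ext_iff]
  | succ m ih =>
    rw [List.prod_range_succ, mul_sigmaMat_apply _ hm, ih (by omega), ih (by omega), ih (by omega)]
    dsimp only
    split_ifs <;> first | rfl | (exfalso; omega) | ring

theorem gammaOne_apply (i k : Fin n) :
    gammaOne n R i k =
      if (i : ℕ) = 0 then (if (k : ℕ) = n - 1 then (-1) ^ (n - 1) else 0)
      else if (k : ℕ) + 1 = i then 1 else 0 := by
  have := i.isLt
  rw [gammaOne, list_prod_sigmaMat_apply (by omega)]
  split_ifs <;> first | rfl | omega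

theorem gammaOne_apply_eq_zero_of_succ_lt {i k : Fin n} (h : (k : ℕ) + 1 < i) :
    gammaOne n R i k = 0 := by
  rw [gammaOne_apply, if_neg (by omega), if_neg (by omega)]

theorem apply_eq_zero_of_mem_pprimeSet {p : Matrix (Fin n) (Fin n) R} (hp : p ∈ PprimeSet n R)
    {i l : Fin n} (hi : 2 ≤ (i : ℕ)) (hl : (l : ℕ) < i) : p i l = 0 :=
  if h : (l : ℕ) ≤ 1 then hp.2.1 i l hi h else hp.2.2 i l hl (by omega)

theorem borelSet_subset_pprimeSet : BorelSet n R ⊆ PprimeSet n R :=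
  fun _ hb => ⟨hb.1, fun i j hi hj => hb.2 i j (by omega), fun i j hij _ => hb.2 i j hij⟩

theorem borelSet_subset_hset : BorelSet n R ⊆ Hset n R :=
  fun _ hb => ⟨hb.1, fun i j hij _ => hb.2 i j hij⟩

theorem mul_gammaOne_mul_mem_hessSet {p h : Matrix (Fin n) (Fin n) R} (hp : p ∈ PprimeSet n R)
    (hh : h ∈ Hset n R) : p * gammaOne n R * h ∈ HessSet n R := by
  refine ⟨by rw [det_mul, det_mul, hp.1, det_gammaOne, hh.1, one_mul, one_mul], fun i j hij => ?_⟩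
  have hpγ : ∀ k : Fin n, (k : ℕ) + 1 < i → (p * gammaOne n R) i k = 0 := fun k hk =>
    mul_apply_eq_zero_of_add_lt (a := 0) (b := 1)
      (fun _ hl => apply_eq_zero_of_mem_pprimeSet hp (by omega) (by omega))
      (fun _ hl => gammaOne_apply_eq_zero_of_succ_lt hl) (by omega)
  exact mul_apply_eq_zero_of_add_lt (a := 1) (b := 0) hpγ
    (fun k hk => hh.2 k j (by omega) (by have := i.isLt; omega)) (by omega)

end Coxeter

theorem coxeter_cell_inclusions_general (n : ℕ) (R : Type*) [CommRing R] :
    {x | ∃ b₁ ∈ BorelSet n R, ∃ b₂ ∈ BorelSet n R, x = b₁ * gammaOne n R * b₂} ⊆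
      {x | ∃ p ∈ PprimeSet n R, ∃ h ∈ Hset n R, x = p * gammaOne n R * h} ∧
    {x | ∃ p ∈ PprimeSet n R, ∃ h ∈ Hset n R, x = p * gammaOne n R * h} ⊆
      HessSet n R := by
  constructor
  · rintro _ ⟨b₁, hb₁, b₂, hb₂, rfl⟩
    exact ⟨b₁, borelSet_subset_pprimeSet hb₁, b₂, borelSet_subset_hset hb₂, rfl⟩
  · rintro _ ⟨p, hp, h, hh, rfl⟩
    exact mul_gammaOne_mul_mem_hessSet hp hh

/-- For `n > 2` and any commutative ring `R` one has
`Bₙ(R)·γ₁·Bₙ(R) ⊆ P'(R)·γ₁·H(R) ⊆ {g ∈ SLₙ(R) : g_{ij} = 0 for i > j + 1}`. -/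
theorem coxeter_cell_inclusions (n : ℕ) (hn : 2 < n) (R : Type*) [CommRing R] :
    {x | ∃ b₁ ∈ BorelSet n R, ∃ b₂ ∈ BorelSet n R, x = b₁ * gammaOne n R * b₂} ⊆
      {x | ∃ p ∈ PprimeSet n R, ∃ h ∈ Hset n R, x = p * gammaOne n R * h} ∧
    {x | ∃ p ∈ PprimeSet n R, ∃ h ∈ Hset n R, x = p * gammaOne n R * h} ⊆
      HessSet n R :=
  coxeter_cell_inclusions_general n R
end
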